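/- Restricted SHSMs can be exponentially more succinct than HSMs and finite state machines: there exist a constant c > 0, a polynomial p, and for every n ∈ ℕ a restricted SHSM M_n with |M_n| ≤ p(n), such that every HSM H whose flat Kripke structure H^F is isomorphic to M_n^F satisfies |H| ≥ 2^{cn}, and every Kripke structure isomorphic to M_n^F has at least 2^{cn} states. -/

import Mathlib

/-- A Scope-dependent Hierarchical State Machine over `AP`.  Machines are indexed by
`Fin h` (index `i` represents the `(i+1)`-st machine `M_{i+1}` of the paper); the
expansion map returns `none` on nodes and `some j` on a box expanding to machine `j`,
with `j < i` (only lower-indexed machines).  Edges are plain edges `(u,v)` (from nodes)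
and box edges `((u,z),v)` (from a box `u` through an output vertex `z`). -/
structure SHSM (AP : Type) where
  h : ℕ
  hpos : 0 < h
  V : Fin h → Type
  Vfin : ∀ i, Fintype (V i)
  init : ∀ i, V i
  out : ∀ i, Set (V i)
  label : ∀ i, V i → Set AP
  expand : ∀ i, V i → Option (Fin h)
  expand_lt : ∀ i u j, expand i u = some j → (j : ℕ) < (i : ℕ)
  init_node : ∀ i, expand i (init i) = none
  out_node : ∀ i, ∀ z ∈ out i, expand i z = none
  Eplain : ∀ i, V i → V i → Prop
  Ebox : ∀ i, V i → ∀ j, V j → V i → Prop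
  Eplain_node : ∀ i u v, Eplain i u v → expand i u = none
  Ebox_ok : ∀ i u j z v, Ebox i u j z v → expand i u = some j ∧ z ∈ out j

namespace SHSM

variable {AP : Type}

instance (M : SHSM AP) (i : Fin M.h) : Fintype (M.V i) := M.Vfin i

/-- The disjoint union of all vertex sets of `M`. -/
abbrev Vt (M : SHSM AP) : Type := Σ i : Fin M.h, M.V i

/-- The index of the top-level machine `M_h`. -/
def top (M : SHSM AP) : Fin M.h := ⟨M.h - 1, Nat.sub_lt M.hpos Nat.one_pos⟩

/-- `x` is a node (it does not expand to any machine). -/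
def IsNode (M : SHSM AP) (x : M.Vt) : Prop := M.expand x.1 x.2 = none

/-- The expansion step relation: `u_{ℓ+1} ∈ V_{expand(u_ℓ)}`. -/
def stepRel (M : SHSM AP) : M.Vt → M.Vt → Prop :=
  fun a b => M.expand a.1 a.2 = some b.1

/-- A well-formed sequence of vertices `u₁ … u_m` (`m ≥ 1`) with
`u_{ℓ+1} ∈ V_{expand(u_ℓ)}`. -/
def WFSeq (M : SHSM AP) (l : List M.Vt) : Prop :=
  l ≠ [] ∧ l.Chain' M.stepRel

/-- A well-formed sequence which starts in machine `j` and ends at a node.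
For `j = M.top` these are exactly the complete well-formed sequences, i.e. the
states of the flat Kripke structure `M^F`; for general `j` they are the states of
the flat Kripke structure of the sub-SHSM `(M₁,…,M_j)`. -/
def CompleteAt (M : SHSM AP) (j : Fin M.h) (l : List M.Vt) : Prop :=
  M.WFSeq l ∧ (∃ x, l.head? = some x ∧ x.1 = j) ∧ (∃ x, l.getLast? = some x ∧ M.IsNode x)

/-- A complete well-formed sequence: a state of the flat Kripke structure `M^F`. -/
def Complete (M : SHSM AP) (l : List M.Vt) : Prop :=
  M.CompleteAt M.top l

/-- The transition relation of the flat Kripke structure `M^F`, given by the four kinds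
of moves induced by the edges of `M`: node to node, node to box, box to node (through an
output vertex), and box to box. -/
def FlatTrans (M : SHSM AP) (X Y : List M.Vt) : Prop :=
  (∃ (p : List M.Vt) (i : Fin M.h) (a b : M.V i),
      X = p ++ [⟨i, a⟩] ∧ Y = p ++ [⟨i, b⟩] ∧
      M.Eplain i a b ∧ M.expand i b = none) ∨
  (∃ (p : List M.Vt) (i : Fin M.h) (a b : M.V i) (j : Fin M.h),
      X = p ++ [⟨i, a⟩] ∧ Y = p ++ [⟨i, b⟩, ⟨j, M.init j⟩] ∧
      M.Eplain i a b ∧ M.expand i b = some j) ∨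
  (∃ (p : List M.Vt) (i : Fin M.h) (a : M.V i) (j : Fin M.h) (z : M.V j) (v : M.V i),
      X = p ++ [⟨i, a⟩, ⟨j, z⟩] ∧ Y = p ++ [⟨i, v⟩] ∧
      M.Ebox i a j z v ∧ M.expand i v = none) ∨
  (∃ (p : List M.Vt) (i : Fin M.h) (a : M.V i) (j : Fin M.h) (z : M.V j) (b : M.V i)
      (j' : Fin M.h),
      X = p ++ [⟨i, a⟩, ⟨j, z⟩] ∧ Y = p ++ [⟨i, b⟩, ⟨j', M.init j'⟩] ∧
      M.Ebox i a j z b ∧ M.expand i b = some j')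

/-- The label of a state of `M^F`: the union of the labels of the vertices occurring
in the sequence. -/
def flatLabel (M : SHSM AP) (l : List M.Vt) : Set AP :=
  {p | ∃ x ∈ l, p ∈ M.label x.1 x.2}

/-- The initial state `⟨in_h⟩` of `M^F`. -/
def initSeq (M : SHSM AP) : List M.Vt := [⟨M.top, M.init M.top⟩]

lemma initSeq_complete (M : SHSM AP) : M.Complete M.initSeq :=
  ⟨⟨by simp [initSeq], List.isChain_singleton _⟩,
   ⟨⟨M.top, M.init M.top⟩, rfl, rfl⟩,
   ⟨⟨M.top, M.init M.top⟩, by simp [initSeq], M.init_node M.top⟩⟩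

/-- The states of the flat Kripke structure `M^F`. -/
def States (M : SHSM AP) : Type := {l : List M.Vt // M.Complete l}

/-- `M` is an HSM: boxes carry no atomic propositions. -/
def IsHSM (M : SHSM AP) : Prop :=
  ∀ i (u : M.V i), M.expand i u ≠ none → M.label i u = ∅

/-- The size of `M`: total number of vertices plus total number of edges. -/
noncomputable def size (M : SHSM AP) : ℕ :=
  Fintype.card M.Vt
  + {e : Σ i : Fin M.h, M.V i × M.V i | M.Eplain e.1 e.2.1 e.2.2}.ncard
  + {e : Σ (i : Fin M.h) (j : Fin M.h), M.V i × M.V j × M.V i |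
       M.Ebox e.1 e.2.2.1 e.2.1 e.2.2.2.1 e.2.2.2.2}.ncard

/-- `expand⁺`: machine `j` belongs to the iterated expansion of vertex `u`. -/
inductive InExpandPlus (M : SHSM AP) : M.Vt → Fin M.h → Prop where
  | base {i : Fin M.h} {u : M.V i} {j : Fin M.h} :
      M.expand i u = some j → InExpandPlus M ⟨i, u⟩ j
  | step {i : Fin M.h} {u : M.V i} {j : Fin M.h} (u' : M.V j) {j' : Fin M.h} :
      M.expand i u = some j → InExpandPlus M ⟨j, u'⟩ j' → InExpandPlus M ⟨i, u⟩ j'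

/-- `u` is an ancestor of `v`: `v` lies in a machine belonging to `expand⁺(u)`. -/
def Ancestor (M : SHSM AP) (u v : M.Vt) : Prop :=
  M.InExpandPlus u v.1

/-- A restricted SHSM: labels of a vertex and of any of its descendants are disjoint. -/
def Restricted (M : SHSM AP) : Prop :=
  ∀ u v : M.Vt, M.Ancestor u v → M.label u.1 u.2 ∩ M.label v.1 v.2 = ∅

end SHSM

/-- The flat Kripke structures of `M` and `M'` are isomorphic: a bijection of states
mapping the initial state to the initial state and preserving transitions and labels. -/
def FlatIso {AP : Type} (M M' : SHSM AP) : Prop :=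
  ∃ f : M.States ≃ M'.States,
    f ⟨M.initSeq, M.initSeq_complete⟩ = ⟨M'.initSeq, M'.initSeq_complete⟩ ∧
    (∀ X Y : M.States, M.FlatTrans X.1 Y.1 ↔ M'.FlatTrans (f X).1 (f Y).1) ∧
    (∀ X : M.States, M.flatLabel X.1 = M'.flatLabel (f X).1)

/-- A Kripke structure over atomic propositions `AP` with state type `S`:
an initial state, a total transition relation, and a labeling. -/
structure Kripke (S AP : Type) where
  init : S
  R : S → S → Prop
  total : ∀ s, ∃ t, R s t
  L : S → Set AP

/-- The Kripke structure `K` is isomorphic to the flat Kripke structure `M^F`: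
a bijection of states mapping the initial state to the initial state and preserving
transitions and labels. -/
def KripkeFlatIso {S AP : Type} (K : Kripke S AP) (M : SHSM AP) : Prop :=
  ∃ f : S ≃ M.States,
    f K.init = ⟨M.initSeq, M.initSeq_complete⟩ ∧
    (∀ s t : S, K.R s t ↔ M.FlatTrans (f s).1 (f t).1) ∧
    (∀ s : S, K.L s = M.flatLabel (f s).1)

/-!
In `bitTower n` each machine `i ≥ 1` has two boxes calling machine `i - 1`, only one of them
labeled, by `{i}`. Descending from the top machine chooses one bit per level, so the flat
structure has `2 ^ n` states with pairwise distinct labels, while the machine itself has only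
polynomially many vertices and edges. A Kripke structure isomorphic to the flat structure must
have `2 ^ n` states as well. In an HSM boxes carry no labels, so the label of a flat state is the
label of its last vertex; hence `2 ^ n` distinct labels force `2 ^ n` distinct vertices.
-/

namespace SHSM

variable {AP : Type}

theorem InExpandPlus.lt {M : SHSM AP} {x : M.Vt} {j : Fin M.h} (h : M.InExpandPlus x j) :
    (j : ℕ) < x.1 := by
  induction h with
  | base h => exact M.expand_lt _ _ _ h
  | step _ h _ ih => exact ih.trans (M.expand_lt _ _ _ h)

theorem card_Vt_le_size (M : SHSM AP) : Fintype.card M.Vt ≤ M.size := by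
  unfold size
  omega

theorem size_le (M : SHSM AP) :
    M.size ≤ Fintype.card M.Vt + Fintype.card (Σ i : Fin M.h, M.V i × M.V i)
      + Fintype.card (Σ (i j : Fin M.h), M.V i × M.V j × M.V i) := by
  unfold size
  simp only [← Nat.card_eq_fintype_card]
  gcongr <;> exact Set.ncard_le_card _

@[simp]
theorem flatLabel_nil (M : SHSM AP) : M.flatLabel [] = ∅ := by
  simp [flatLabel]

@[simp]
theorem flatLabel_cons (M : SHSM AP) (x : M.Vt) (l : List M.Vt) :
    M.flatLabel (x :: l) = M.label x.1 x.2 ∪ M.flatLabel l := by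
  ext p
  simp [flatLabel]

theorem IsHSM.flatLabel_eq_label_getLast {M : SHSM AP} (hM : M.IsHSM) :
    ∀ {l : List M.Vt} (_ : l.IsChain M.stepRel) (hne : l ≠ []),
      M.flatLabel l = M.label (l.getLast hne).1 (l.getLast hne).2
  | [x], _, _ => by simp
  | x :: y :: l, hl, _ => by
    rw [List.isChain_cons_cons] at hl
    have hbox : M.label x.1 x.2 = ∅ := hM _ _ (by rw [hl.1]; simp)
    rw [flatLabel_cons, hbox, Set.empty_union, List.getLast_cons (List.cons_ne_nil _ _)]
    exact hM.flatLabel_eq_label_getLast hl.2 _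

def States.last {M : SHSM AP} (X : M.States) : M.Vt :=
  X.1.getLast X.2.1.1

theorem IsHSM.flatLabel_eq_label_last {M : SHSM AP} (hM : M.IsHSM) (X : M.States) :
    M.flatLabel X.1 = M.label X.last.1 X.last.2 :=
  hM.flatLabel_eq_label_getLast X.2.1.2 X.2.1.1

end SHSM

theorem FlatIso.card_le_card_Vt {AP : Type} {H M : SHSM AP} (hH : H.IsHSM) (e : FlatIso H M)
    {ι : Type*} [Fintype ι] (g : ι → M.States)
    (hg : Function.Injective fun a => M.flatLabel (g a).1) :
    Fintype.card ι ≤ Fintype.card H.Vt := by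
  obtain ⟨f, -, -, hlab⟩ := e
  have hcomp : (fun x : H.Vt => H.label x.1 x.2) ∘ (fun a => (f.symm (g a)).last) =
      fun a => M.flatLabel (g a).1 :=
    funext fun a => by simp [← hH.flatLabel_eq_label_last, hlab]
  rw [← hcomp] at hg
  exact Fintype.card_le_of_injective _ hg.of_comp

theorem KripkeFlatIso.card_le {S AP : Type} [Fintype S] {K : Kripke S AP} {M : SHSM AP}
    (e : KripkeFlatIso K M) {ι : Type*} [Fintype ι] (g : ι → M.States)
    (hg : Function.Injective fun a => M.flatLabel (g a).1) :
    Fintype.card ι ≤ Fintype.card S := by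
  obtain ⟨f, -, -, hlab⟩ := e
  have hcomp : K.L ∘ (fun a => f.symm (g a)) = fun a => M.flatLabel (g a).1 :=
    funext fun a => by simp [hlab]
  rw [← hcomp] at hg
  exact Fintype.card_le_of_injective _ hg.of_comp

namespace SHSM

variable (n : ℕ)

def bitTowerExpand (i : Fin (n + 1)) (u : Option Bool) : Option (Fin (n + 1)) :=
  if u = none ∨ (i : ℕ) = 0 then none else some ⟨i - 1, by omega⟩

/-- The self-loops on nodes make the flat transition relation total, so that Kripke structures
isomorphic to the flat structure exist. -/
def bitTower : SHSM ℕ where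
  h := n + 1
  hpos := n.succ_pos
  V _ := Option Bool
  Vfin _ := inferInstance
  init _ := none
  out _ := ∅
  label i u := if u = some true then {(i : ℕ)} else ∅
  expand := bitTowerExpand n
  expand_lt i u j h := by
    unfold bitTowerExpand at h
    split_ifs at h with h0
    cases h
    simp only [not_or] at h0
    show (i : ℕ) - 1 < i
    omega
  init_node _ := rfl
  out_node _ _ hz := hz.elim
  Eplain i u v := u = v ∧ bitTowerExpand n i u = none
  Ebox _ _ _ _ _ := False
  Eplain_node _ _ _ h := h.2
  Ebox_ok _ _ _ _ _ h := h.elim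

namespace bitTower

theorem label_subset (i : Fin (n + 1)) (u : Option Bool) :
    (bitTower n).label i u ⊆ {(i : ℕ)} := by
  simp only [bitTower]
  split_ifs <;> simp

theorem restricted : (bitTower n).Restricted := by
  intro u v h
  have hne : (u.1 : ℕ) ≠ v.1 := (InExpandPlus.lt h).ne'
  exact Set.disjoint_iff_inter_eq_empty.mp <|
    ((Set.disjoint_singleton.mpr hne).mono (label_subset n _ _)
      (label_subset n _ _))

theorem size_le : (bitTower n).size ≤ 27 * (n + 1) ^ 2 + 12 * (n + 1) := by
  refine (bitTower n).size_le.trans_eq ?_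
  simp only [← Nat.card_eq_fintype_card]
  simp [bitTower, Nat.card_eq_fintype_card, Fintype.card_sigma]
  ring

variable {n}

def chain (v : Fin n → Bool) : (m : ℕ) → m < n + 1 → List (bitTower n).Vt
  | 0, h => [⟨⟨0, h⟩, none⟩]
  | m + 1, h => ⟨⟨m + 1, h⟩, some (v ⟨m, by omega⟩)⟩ :: chain v m (by omega)

theorem chain_ne_nil (v : Fin n → Bool) (m : ℕ) (h : m < n + 1) : chain v m h ≠ [] := by
  cases m <;> simp [chain]

theorem head?_chain (v : Fin n → Bool) (m : ℕ) (h : m < n + 1) :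
    ∃ u, (chain v m h).head? = some ⟨⟨m, h⟩, u⟩ := by
  cases m with
  | zero => exact ⟨none, rfl⟩
  | succ m => exact ⟨_, rfl⟩

theorem getLast_chain (v : Fin n → Bool) (m : ℕ) (h : m < n + 1) :
    (chain v m h).getLast (chain_ne_nil v m h) = ⟨⟨0, n.succ_pos⟩, none⟩ := by
  induction m with
  | zero => rfl
  | succ m ih => simp [chain, List.getLast_cons (chain_ne_nil v m _), ih]

theorem isChain_chain (v : Fin n → Bool) (m : ℕ) (h : m < n + 1) :
    (chain v m h).IsChain (bitTower n).stepRel := by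
  induction m with
  | zero => exact List.isChain_singleton _
  | succ m ih =>
    refine List.isChain_cons.mpr ⟨fun x hx => ?_, ih _⟩
    obtain ⟨u, hu⟩ := head?_chain v m (by omega)
    rw [hu, Option.mem_some_iff] at hx
    subst hx
    simp [stepRel, bitTower, bitTowerExpand]

theorem succ_mem_flatLabel_chain (v : Fin n → Bool) (m : ℕ) (h : m < n + 1) (i : Fin n) :
    (i : ℕ) + 1 ∈ (bitTower n).flatLabel (chain v m h) ↔ (i : ℕ) < m ∧ v i = true := by
  induction m with
  | zero => simp [chain, bitTower]
  | succ m ih =>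
    simp only [chain, flatLabel_cons, Set.mem_union, ih]
    simp only [bitTower, Option.some.injEq, Set.mem_ite_empty_right, Set.mem_singleton_iff,
      Nat.add_right_cancel_iff, Order.lt_add_one_iff]
    by_cases him : (i : ℕ) = m
    · subst him
      simp
    · grind

def state (v : Fin n → Bool) : (bitTower n).States :=
  ⟨chain v n n.lt_succ_self,
    ⟨chain_ne_nil v n _, isChain_chain v n _⟩,
    ⟨_, (head?_chain v n _).choose_spec, rfl⟩,
    ⟨_, List.getLast?_eq_getLast_of_ne_nil .., by rw [getLast_chain]; rfl⟩⟩

theorem flatLabel_state_injective :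
    Function.Injective fun v : Fin n → Bool => (bitTower n).flatLabel (state v).1 := by
  intro v w hvw
  funext i
  have hi := Set.ext_iff.mp hvw ((i : ℕ) + 1)
  simp only [state, succ_mem_flatLabel_chain, i.isLt, true_and] at hi
  exact Bool.eq_iff_iff.mpr hi

end bitTower

end SHSM

/-- Restricted SHSMs can be exponentially more succinct than HSMs and finite state
machines: there are a constant `c > 0`, a polynomial `p`, and restricted SHSMs `M_n` of
size at most `p(n)` such that every HSM whose flat Kripke structure is isomorphic to
`M_n^F` has size at least `2^{cn}`, and every Kripke structure isomorphic to `M_n^F` has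
at least `2^{cn}` states. -/
theorem restricted_shsm_exp_succinct_vs_hsm :
    ∃ (AP : Type) (c : ℝ), 0 < c ∧
      ∃ (p : Polynomial ℕ) (Mfam : ℕ → SHSM AP),
        ∀ n : ℕ,
          (Mfam n).Restricted ∧ (Mfam n).size ≤ p.eval n ∧
          (∀ H : SHSM AP, H.IsHSM → FlatIso H (Mfam n) →
            (2 : ℝ) ^ (c * n) ≤ (H.size : ℝ)) ∧
          (∀ (S : Type) (inst : Fintype S) (K : Kripke S AP),
            KripkeFlatIso K (Mfam n) →
            (2 : ℝ) ^ (c * n) ≤ (@Fintype.card S inst : ℝ)) := by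
  refine ⟨ℕ, 1, one_pos,
    Polynomial.C 27 * (Polynomial.X + 1) ^ 2 + Polynomial.C 12 * (Polynomial.X + 1),
    SHSM.bitTower, fun n => ?_⟩
  have hbits : (2 : ℝ) ^ ((1 : ℝ) * n) = Fintype.card (Fin n → Bool) := by
    simp [Real.rpow_natCast]
  refine ⟨SHSM.bitTower.restricted n, by simpa using SHSM.bitTower.size_le n, ?_, ?_⟩
  · intro H hH e
    rw [hbits]
    exact_mod_cast (e.card_le_card_Vt hH _ SHSM.bitTower.flatLabel_state_injective).trans
      H.card_Vt_le_size
  · intro S _ K e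
    rw [hbits]
    exact_mod_cast e.card_le _ SHSM.bitTower.flatLabel_state_injective
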